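/- arXiv:2312.15706 — 2 statements merged into one kernel-verified Lean document; each statement's English description precedes it below -/
import Mathlib

section
/- Let x* ∈ X and set y* := y(x*). Then x* is S-stationary for (SPO) if and only if (x*, y*) is a KKT point of (SPOcp). -/
open Filter Topology

noncomputable section

/-- Euclidean n-space. -/
abbrev E (n : ℕ) : Type := EuclideanSpace ℝ (Fin n)

/-- The SP-Lagrangian L(x, λ, μ) = f(x) + λᵀg(x) + μᵀh(x). -/
def LSP {n m q : ℕ} (f : E n → ℝ) (g : Fin m → E n → ℝ) (h : Fin q → E n → ℝ)
    (lam : Fin m → ℝ) (mu : Fin q → ℝ) (x : E n) : ℝ :=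
  f x + (∑ i, lam i * g i x) + (∑ j, mu j * h j x)

/-- S-stationarity of x* for (SPO). -/
def SStat {n m q : ℕ} (f : E n → ℝ) (g : Fin m → E n → ℝ) (h : Fin q → E n → ℝ)
    (xstar : E n) : Prop :=
  ∃ (lam : Fin m → ℝ) (mu : Fin q → ℝ),
    (∀ i, 0 ≤ lam i) ∧ (∀ i, lam i * g i xstar = 0) ∧
    ∀ i, xstar i ≠ 0 → gradient (LSP f g h lam mu) xstar i = 0

/-- KKT point of the complementarity reformulation (SPOcp). -/
def KKTcp {n m q : ℕ} (f : E n → ℝ) (g : Fin m → E n → ℝ) (h : Fin q → E n → ℝ)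
    (p : Fin n → ℝ → ℝ) (x y : E n) : Prop :=
  (∀ i, g i x ≤ 0) ∧ (∀ j, h j x = 0) ∧ (∀ i, 0 ≤ x i) ∧ (∀ i, 0 ≤ y i) ∧
  (∀ i, x i * y i = 0) ∧
  ∃ (lam : Fin m → ℝ) (mu : Fin q → ℝ) (νx νy γ : Fin n → ℝ),
    (∀ i, 0 ≤ lam i) ∧ (∀ i, lam i * g i x = 0) ∧
    (∀ i, 0 ≤ νx i) ∧ (∀ i, νx i * x i = 0) ∧
    (∀ i, 0 ≤ νy i) ∧ (∀ i, νy i * y i = 0) ∧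
    (∀ k, gradient f x k + (∑ i, lam i * gradient (g i) x k) +
        (∑ j, mu j * gradient (h j) x k) - νx k + γ k * y k = 0) ∧
    (∀ i, deriv (p i) (y i) - νy i + γ i * x i = 0)

/-! At `y = y(x*)` the complementarity `x_i y_i = 0` holds by construction, and off the support of
`x*` the coordinate `y_i = s_i` is positive. Hence, with `ν_x = ν_y = 0`, the free multiplier `γ_i`
absorbs the `i`-th component of `∇ₓL` wherever `x*_i = 0`, the `y`-equation there reduces to
`p_i'(s_i) = 0` (`s_i` minimises `p_i`), and on the support of `x*` the `x`-equation is exactly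
S-stationarity while `γ_i = -p_i'(0) / x*_i` solves the `y`-equation. Conversely, on the support of
`x*` complementarity kills `(ν_x)_i` and `y_i`, leaving the S-stationarity equation. -/

section Lagrangian

variable {n m q : ℕ} {f : E n → ℝ} {g : Fin m → E n → ℝ} {h : Fin q → E n → ℝ} {x : E n}

theorem gradient_LSP (hf : DifferentiableAt ℝ f x) (hg : ∀ i, DifferentiableAt ℝ (g i) x)
    (hh : ∀ j, DifferentiableAt ℝ (h j) x) (lam : Fin m → ℝ) (mu : Fin q → ℝ) :
    gradient (LSP f g h lam mu) x =
      gradient f x + ∑ i, lam i • gradient (g i) x + ∑ j, mu j • gradient (h j) x := by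
  have hL : HasFDerivAt (LSP f g h lam mu)
      (fderiv ℝ f x + ∑ i, lam i • fderiv ℝ (g i) x + ∑ j, mu j • fderiv ℝ (h j) x) x :=
    (hf.hasFDerivAt.add (HasFDerivAt.fun_sum fun i _ => (hg i).hasFDerivAt.const_mul (lam i))).add
      (HasFDerivAt.fun_sum fun j _ => (hh j).hasFDerivAt.const_mul (mu j))
  simp [gradient, hL.fderiv, map_sum]

theorem gradient_LSP_apply (hf : DifferentiableAt ℝ f x) (hg : ∀ i, DifferentiableAt ℝ (g i) x)
    (hh : ∀ j, DifferentiableAt ℝ (h j) x) (lam : Fin m → ℝ) (mu : Fin q → ℝ) (k : Fin n) :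
    gradient (LSP f g h lam mu) x k = gradient f x k + (∑ i, lam i * gradient (g i) x k) +
      (∑ j, mu j * gradient (h j) x k) := by
  simp [gradient_LSP hf hg hh]

end Lagrangian

section Reformulation

variable {n m q : ℕ} {f : E n → ℝ} {g : Fin m → E n → ℝ} {h : Fin q → E n → ℝ}
  {p : Fin n → ℝ → ℝ} {x y : E n}

theorem KKTcp.sStat (hf : DifferentiableAt ℝ f x) (hg : ∀ i, DifferentiableAt ℝ (g i) x)
    (hh : ∀ j, DifferentiableAt ℝ (h j) x) (hKKT : KKTcp f g h p x y) : SStat f g h x := by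
  obtain ⟨-, -, -, -, hxy, lam, mu, νx, _, _, hlam, hcomp, -, hνx, -, -, hx_eq, -⟩ := hKKT
  refine ⟨lam, mu, hlam, hcomp, fun k hk => ?_⟩
  have hνxk : νx k = 0 := (mul_eq_zero.1 (hνx k)).resolve_right hk
  have hyk : y k = 0 := (mul_eq_zero.1 (hxy k)).resolve_left hk
  simpa [gradient_LSP_apply hf hg hh, hνxk, hyk] using hx_eq k

theorem SStat.kktcp {s : Fin n → ℝ} (hf : DifferentiableAt ℝ f x)
    (hg : ∀ i, DifferentiableAt ℝ (g i) x) (hh : ∀ j, DifferentiableAt ℝ (h j) x)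
    (hgx : ∀ i, g i x ≤ 0) (hhx : ∀ j, h j x = 0) (hxnn : ∀ i, 0 ≤ x i)
    (hs : ∀ i, 0 < s i) (hps : ∀ i, deriv (p i) (s i) = 0)
    (hy : ∀ i, (x i = 0 → y i = s i) ∧ (x i ≠ 0 → y i = 0)) (hS : SStat f g h x) :
    KKTcp f g h p x y := by
  obtain ⟨lam, mu, hlam, hcomp, hstat⟩ := hS
  simp only [gradient_LSP_apply hf hg hh] at hstat
  let G : Fin n → ℝ := fun k =>
    gradient f x k + (∑ i, lam i * gradient (g i) x k) + (∑ j, mu j * gradient (h j) x k)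
  let γ : Fin n → ℝ := fun k => if x k = 0 then -G k / s k else -deriv (p k) 0 / x k
  refine ⟨hgx, hhx, hxnn, fun i => ?_, fun i => ?_, lam, mu, 0, 0, γ, hlam, hcomp,
    fun _ => le_rfl, fun _ => zero_mul _, fun _ => le_rfl, fun _ => zero_mul _,
    fun k => ?_, fun k => ?_⟩
  · rcases eq_or_ne (x i) 0 with hx | hx
    · simpa [(hy i).1 hx] using (hs i).le
    · simp [(hy i).2 hx]
  · rcases eq_or_ne (x i) 0 with hx | hx
    · simp [hx]
    · simp [(hy i).2 hx]
  · rcases eq_or_ne (x k) 0 with hx | hx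
    · simp [γ, G, hx, (hy k).1 hx, (hs k).ne']
    · simpa [γ, hx, (hy k).2 hx] using hstat k hx
  · rcases eq_or_ne (x k) 0 with hx | hx
    · simp [γ, hx, (hy k).1 hx, hps k]
    · simp [γ, hx, (hy k).2 hx]

end Reformulation

theorem stmt_6_general {n m q : ℕ}
    (f : E n → ℝ) (g : Fin m → E n → ℝ) (h : Fin q → E n → ℝ)
    (hf : ContDiff ℝ 1 f) (hg : ∀ i, ContDiff ℝ 1 (g i)) (hh : ∀ j, ContDiff ℝ 1 (h j))
    (p : Fin n → ℝ → ℝ) (s : Fin n → ℝ)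
    (hspos : ∀ i, 0 < s i)
    (hmin : ∀ i t, p i (s i) ≤ p i t)
    (xstar : E n)
    -- x* ∈ X :
    (hgx : ∀ i, g i xstar ≤ 0) (hhx : ∀ j, h j xstar = 0) (hxnn : ∀ i, 0 ≤ xstar i)
    -- y* := y(x*) :
    (ystar : E n)
    (hy : ∀ i, (xstar i = 0 → ystar i = s i) ∧ (xstar i ≠ 0 → ystar i = 0)) :
    SStat f g h xstar ↔ KKTcp f g h p xstar ystar := by
  have hfd := hf.differentiable one_ne_zero xstar
  have hgd i := (hg i).differentiable one_ne_zero xstar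
  have hhd j := (hh j).differentiable one_ne_zero xstar
  have hps i : deriv (p i) (s i) = 0 :=
    IsLocalMin.deriv_eq_zero (Eventually.of_forall (hmin i))
  exact ⟨SStat.kktcp hfd hgd hhd hgx hhx hxnn hspos hps hy, KKTcp.sStat hfd hgd hhd⟩

/-- Let x* ∈ X and y* := y(x*).  Then x* is S-stationary for (SPO)
if and only if (x*, y*) is a KKT point of (SPOcp). -/
theorem stmt_6 {n m q : ℕ} (hn : 1 ≤ n) {ρ : ℝ} (hρ : 0 < ρ)
    (f : E n → ℝ) (g : Fin m → E n → ℝ) (h : Fin q → E n → ℝ)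
    (hf : ContDiff ℝ 1 f) (hg : ∀ i, ContDiff ℝ 1 (g i)) (hh : ∀ j, ContDiff ℝ 1 (h j))
    (p : Fin n → ℝ → ℝ) (s : Fin n → ℝ)
    (hp : ∀ i, ContDiff ℝ 1 (p i))
    (hconv : ∀ i, ConvexOn ℝ Set.univ (p i))
    (hspos : ∀ i, 0 < s i)
    (hmin : ∀ i t, p i (s i) ≤ p i t)
    (hstrict : ∀ i t, t ≠ s i → p i (s i) < p i t)
    (hscale : ∀ i, p i 0 - p i (s i) = ρ)
    (xstar : E n)
    -- x* ∈ X :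
    (hgx : ∀ i, g i xstar ≤ 0) (hhx : ∀ j, h j xstar = 0) (hxnn : ∀ i, 0 ≤ xstar i)
    -- y* := y(x*) :
    (ystar : E n)
    (hy : ∀ i, (xstar i = 0 → ystar i = s i) ∧ (xstar i ≠ 0 → ystar i = 0)) :
    SStat f g h xstar ↔ KKTcp f g h p xstar ystar :=
  stmt_6_general f g h hf hg hh p s hspos hmin xstar hgx hhx hxnn ystar hy
end
end

section
/- If x* ∈ X is an AS-stationary point of (SPO) and x* is AS-regular, then x* is an S-stationary point of (SPO). -/
open Filter Topology

noncomputable section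

/-- AS-stationarity (approximate S-stationarity) of x* for (SPO). -/
def ASStat {n m q : ℕ} (f : E n → ℝ) (g : Fin m → E n → ℝ) (h : Fin q → E n → ℝ)
    (xstar : E n) : Prop :=
  ∃ (xk : ℕ → E n) (lamk : ℕ → Fin m → ℝ) (muk : ℕ → Fin q → ℝ),
    Tendsto xk atTop (𝓝 xstar) ∧
    (∀ k i, 0 ≤ lamk k i) ∧
    (∀ i, xstar i ≠ 0 →
      Tendsto (fun k => gradient (LSP f g h (lamk k) (muk k)) (xk k) i) atTop (𝓝 0)) ∧
    (∀ i, Tendsto (fun k => min (-(g i (xk k))) (lamk k i)) atTop (𝓝 0))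

/-- The cone K(x) (relative to the fixed point x*). -/
def Kcone {n m q : ℕ} (g : Fin m → E n → ℝ) (h : Fin q → E n → ℝ)
    (xstar : E n) (x : E n) : Set (E n) :=
  {d | ∃ (mu : Fin q → ℝ) (lam : Fin m → ℝ),
    (∀ i, 0 ≤ lam i) ∧ (∀ i, g i xstar ≠ 0 → lam i = 0) ∧
    ∀ j, xstar j ≠ 0 →
      d j = (∑ i, mu i * gradient (h i) x j) + ∑ i, lam i * gradient (g i) x j}

/-- AS-regularity: outer semicontinuity of K(·) at x*. -/
def ASRegular {n m q : ℕ} (g : Fin m → E n → ℝ) (h : Fin q → E n → ℝ)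
    (xstar : E n) : Prop :=
  ∀ (xk dk : ℕ → E n) (d : E n),
    Tendsto xk atTop (𝓝 xstar) → Tendsto dk atTop (𝓝 d) →
    (∀ k, dk k ∈ Kcone g h xstar (xk k)) → d ∈ Kcone g h xstar xstar

/-!
Along an AS-stationary sequence `(xᵏ, λᵏ, μᵏ)`, the multipliers of constraints inactive at `x*`
tend to zero, because `min(-gᵢ(xᵏ), λᵢᵏ) → 0` while `-gᵢ(xᵏ)` stays away from zero. Discarding
them, the constraint part of `∇ₓL(xᵏ, λᵏ, μᵏ)` on the free coordinates `x*ⱼ ≠ 0` is a vector of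
`K(xᵏ)`, and it converges to `-∇f(x*)` there. AS-regularity puts the limit in `K(x*)`, and the
multipliers representing it are the S-stationarity multipliers.
-/

lemma tendsto_of_tendsto_min_of_tendsto_ne_zero {α : Type*} {l : Filter α} [l.NeBot]
    {a b : α → ℝ} {c : ℝ} (ha : Tendsto a l (𝓝 c)) (hc : c ≠ 0)
    (hmin : Tendsto (fun k => min (a k) (b k)) l (𝓝 0)) :
    Tendsto b l (𝓝 0) := by
  have hc_pos : 0 < c :=
    lt_of_le_of_ne (le_of_tendsto_of_tendsto' hmin ha fun k => min_le_left _ _) hc.symm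
  refine hmin.congr' ?_
  filter_upwards [ha.eventually (eventually_gt_nhds (half_lt_self hc_pos)),
    hmin.eventually (eventually_lt_nhds (half_pos hc_pos))] with k hak hmink
  have hba : b k < a k := by rcases min_lt_iff.mp hmink with h | h <;> linarith
  exact min_eq_right hba.le

lemma ContDiff.continuous_gradient {F : Type*} [NormedAddCommGroup F] [InnerProductSpace ℝ F]
    [CompleteSpace F] {φ : F → ℝ} (hφ : ContDiff ℝ 1 φ) : Continuous (gradient φ) :=
  (InnerProductSpace.toDual ℝ F).symm.continuous.comp (hφ.continuous_fderiv one_ne_zero)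

lemma EuclideanSpace.gradient_apply {ι : Type*} [Fintype ι] [DecidableEq ι]
    (φ : EuclideanSpace ℝ ι → ℝ) (x : EuclideanSpace ℝ ι) (j : ι) :
    gradient φ x j = fderiv ℝ φ x (EuclideanSpace.single j 1) := by
  rw [← inner_gradient_left, EuclideanSpace.inner_single_right]
  simp

variable {n m q : ℕ} {f : E n → ℝ} {g : Fin m → E n → ℝ} {h : Fin q → E n → ℝ} {xstar : E n}

lemma ContDiff.tendsto_gradient_apply {φ : E n → ℝ} (hφ : ContDiff ℝ 1 φ) {xk : ℕ → E n}
    (hxk : Tendsto xk atTop (𝓝 xstar)) (j : Fin n) :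
    Tendsto (fun k => gradient φ (xk k) j) atTop (𝓝 (gradient φ xstar j)) :=
  ((EuclideanSpace.proj j).continuous.comp hφ.continuous_gradient).tendsto xstar |>.comp hxk

lemma gradient_lsp_apply {x : E n} (hf : DifferentiableAt ℝ f x)
    (hg : ∀ i, DifferentiableAt ℝ (g i) x) (hh : ∀ i, DifferentiableAt ℝ (h i) x)
    (lam : Fin m → ℝ) (mu : Fin q → ℝ) (j : Fin n) :
    gradient (LSP f g h lam mu) x j
      = gradient f x j + (∑ i, lam i * gradient (g i) x j)
        + ∑ i, mu i * gradient (h i) x j := by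
  have hL : HasFDerivAt (LSP f g h lam mu)
      (fderiv ℝ f x + (∑ i, lam i • fderiv ℝ (g i) x) + ∑ i, mu i • fderiv ℝ (h i) x) x :=
    (hf.hasFDerivAt.add
      (HasFDerivAt.fun_sum fun i _ => (hg i).hasFDerivAt.const_mul (lam i))).add
        (HasFDerivAt.fun_sum fun i _ => (hh i).hasFDerivAt.const_mul (mu i))
  simp only [EuclideanSpace.gradient_apply, hL.fderiv, add_apply,
    FunLike.coe_sum, Finset.sum_apply, smul_apply, smul_eq_mul]

def activePart (g : Fin m → E n → ℝ) (xstar : E n) (lam : Fin m → ℝ) : Fin m → ℝ :=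
  fun i => if g i xstar = 0 then lam i else 0

lemma tendsto_sub_activePart {xk : ℕ → E n} {lamk : ℕ → Fin m → ℝ} (hg : ∀ i, Continuous (g i))
    (hxk : Tendsto xk atTop (𝓝 xstar))
    (hmin : ∀ i, Tendsto (fun k => min (-(g i (xk k))) (lamk k i)) atTop (𝓝 0)) (i : Fin m) :
    Tendsto (fun k => lamk k i - activePart g xstar (lamk k) i) atTop (𝓝 0) := by
  by_cases hgi : g i xstar = 0
  · simp [activePart, hgi]
  · simpa [activePart, hgi] using tendsto_of_tendsto_min_of_tendsto_ne_zero
      (((hg i).tendsto xstar).comp hxk).neg (neg_ne_zero.mpr hgi) (hmin i)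

def freeDirection (g : Fin m → E n → ℝ) (h : Fin q → E n → ℝ) (xstar x : E n)
    (lam : Fin m → ℝ) (mu : Fin q → ℝ) : E n :=
  WithLp.toLp 2 fun j => if xstar j = 0 then 0 else
    (∑ i, mu i * gradient (h i) x j) + ∑ i, activePart g xstar lam i * gradient (g i) x j

lemma freeDirection_mem_kcone {x : E n} {lam : Fin m → ℝ} (hlam : ∀ i, 0 ≤ lam i)
    (mu : Fin q → ℝ) : freeDirection g h xstar x lam mu ∈ Kcone g h xstar x := by
  refine ⟨mu, activePart g xstar lam, fun i => ?_, fun i hgi => if_neg hgi, fun j hj => ?_⟩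
  · unfold activePart; split_ifs <;> simp [hlam i]
  · simp [freeDirection, hj]

lemma tendsto_freeDirection_apply (hf : ContDiff ℝ 1 f) (hg : ∀ i, ContDiff ℝ 1 (g i))
    (hh : ∀ i, ContDiff ℝ 1 (h i)) {xk : ℕ → E n} {lamk : ℕ → Fin m → ℝ} {muk : ℕ → Fin q → ℝ}
    (hxk : Tendsto xk atTop (𝓝 xstar))
    (hmin : ∀ i, Tendsto (fun k => min (-(g i (xk k))) (lamk k i)) atTop (𝓝 0)) {j : Fin n}
    (hgrad : Tendsto (fun k => gradient (LSP f g h (lamk k) (muk k)) (xk k) j) atTop (𝓝 0)) :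
    Tendsto (fun k => (∑ i, muk k i * gradient (h i) (xk k) j)
        + ∑ i, activePart g xstar (lamk k) i * gradient (g i) (xk k) j)
      atTop (𝓝 (-gradient f xstar j)) := by
  have hinactive : Tendsto (fun k => ∑ i, (lamk k i - activePart g xstar (lamk k) i)
      * gradient (g i) (xk k) j) atTop (𝓝 0) := by
    simpa using tendsto_finsetSum Finset.univ fun i _ =>
      (tendsto_sub_activePart (fun i => (hg i).continuous) hxk hmin i).mul
        ((hg i).tendsto_gradient_apply hxk j)
  have hlim := (hgrad.sub (hf.tendsto_gradient_apply hxk j)).sub hinactive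
  rw [zero_sub, sub_zero] at hlim
  refine hlim.congr fun k => ?_
  have hd : ∀ φ : E n → ℝ, ContDiff ℝ 1 φ → DifferentiableAt ℝ φ (xk k) :=
    fun φ hφ => hφ.differentiable one_ne_zero _
  rw [gradient_lsp_apply (hd f hf) (fun i => hd _ (hg i)) (fun i => hd _ (hh i))]
  simp only [sub_mul, Finset.sum_sub_distrib]
  ring

theorem ASStat.exists_tendsto_mem_kcone (hf : ContDiff ℝ 1 f) (hg : ∀ i, ContDiff ℝ 1 (g i))
    (hh : ∀ i, ContDiff ℝ 1 (h i)) (hAS : ASStat f g h xstar) :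
    ∃ (xk dk : ℕ → E n) (d : E n), Tendsto xk atTop (𝓝 xstar) ∧ Tendsto dk atTop (𝓝 d) ∧
      (∀ k, dk k ∈ Kcone g h xstar (xk k)) ∧ ∀ j, xstar j ≠ 0 → d j = -gradient f xstar j := by
  obtain ⟨xk, lamk, muk, hxk, hlam, hgrad, hmin⟩ := hAS
  refine ⟨xk, fun k => freeDirection g h xstar (xk k) (lamk k) (muk k),
    WithLp.toLp 2 fun j => if xstar j = 0 then 0 else -gradient f xstar j, hxk, ?_,
    fun k => freeDirection_mem_kcone (hlam k) (muk k), fun j hj => by simp [hj]⟩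
  refine ((PiLp.continuous_toLp 2 _).tendsto _).comp (tendsto_pi_nhds.mpr fun j => ?_)
  by_cases hj : xstar j = 0
  · simp [hj]
  · simpa [hj] using tendsto_freeDirection_apply hf hg hh hxk hmin (hgrad j hj)

lemma sStat_of_mem_kcone (hf : DifferentiableAt ℝ f xstar)
    (hg : ∀ i, DifferentiableAt ℝ (g i) xstar) (hh : ∀ i, DifferentiableAt ℝ (h i) xstar)
    {d : E n} (hd : d ∈ Kcone g h xstar xstar)
    (hdf : ∀ j, xstar j ≠ 0 → d j = -gradient f xstar j) :
    SStat f g h xstar := by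
  obtain ⟨mu, lam, hlam, hinactive, hdj⟩ := hd
  refine ⟨lam, mu, hlam, fun i => ?_, fun j hj => ?_⟩
  · by_cases hgi : g i xstar = 0
    · rw [hgi, mul_zero]
    · rw [hinactive i hgi, zero_mul]
  · rw [gradient_lsp_apply hf hg hh]
    linarith [hdj j hj, hdf j hj]

theorem stmt_10_general {n m q : ℕ}
    (f : E n → ℝ) (g : Fin m → E n → ℝ) (h : Fin q → E n → ℝ)
    (hf : ContDiff ℝ 1 f) (hg : ∀ i, ContDiff ℝ 1 (g i)) (hh : ∀ j, ContDiff ℝ 1 (h j))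
    (xstar : E n)
    (hAS : ASStat f g h xstar)
    (hreg : ASRegular g h xstar) :
    SStat f g h xstar := by
  obtain ⟨xk, dk, d, hxk, hdk, hmem, hdf⟩ := hAS.exists_tendsto_mem_kcone hf hg hh
  have hd : ∀ φ : E n → ℝ, ContDiff ℝ 1 φ → DifferentiableAt ℝ φ xstar :=
    fun φ hφ => hφ.differentiable one_ne_zero _
  exact sStat_of_mem_kcone (hd f hf) (fun i => hd _ (hg i)) (fun i => hd _ (hh i))
    (hreg xk dk d hxk hdk hmem) hdf

/-- AS-stationary + AS-regular implies S-stationary. -/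
theorem stmt_10 {n m q : ℕ} (hn : 1 ≤ n) {ρ : ℝ} (hρ : 0 < ρ)
    (f : E n → ℝ) (g : Fin m → E n → ℝ) (h : Fin q → E n → ℝ)
    (hf : ContDiff ℝ 1 f) (hg : ∀ i, ContDiff ℝ 1 (g i)) (hh : ∀ j, ContDiff ℝ 1 (h j))
    (xstar : E n)
    -- x* ∈ X :
    (hgx : ∀ i, g i xstar ≤ 0) (hhx : ∀ j, h j xstar = 0) (hxnn : ∀ i, 0 ≤ xstar i)
    (hAS : ASStat f g h xstar)
    (hreg : ASRegular g h xstar) :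
    SStat f g h xstar :=
  stmt_10_general f g h hf hg hh xstar hAS hreg
end
end
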